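/- arXiv:1707.09721 — 4 statements merged into one kernel-verified Lean document; each statement's English description precedes it below -/
import Mathlib

section
/- For all n ≥ 0, Ch_{n,λ}(x) = Σ_{k=0}^{n} Σ_{m=0}^{k} C(n,k) · (x)_{m,λ} · S₁(k,m) · Ch_{n-k,λ}, where Ch_{n,λ} = Ch_{n,λ}(0). -/
open Finset PowerSeries

/-- The degenerate falling factorial `(x)_{n,λ}`. -/
noncomputable def df (l x : ℚ) (n : ℕ) : ℚ := ∏ i ∈ Finset.range n, (x - (i : ℚ) * l)

/-- The formal power series `(1+λt)^{x/λ} := Σ (x)_{n,λ} tⁿ/n!`. -/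
noncomputable def B (l x : ℚ) : PowerSeries ℚ :=
  PowerSeries.mk fun n => df l x n / n.factorial

/-- Signed Stirling numbers of the first kind. -/
def S1 : ℕ → ℕ → ℚ
  | 0, 0 => 1
  | 0, _ + 1 => 0
  | _ + 1, 0 => 0
  | n + 1, k + 1 => S1 n k - (n : ℚ) * S1 n (k + 1)

/-- Stirling numbers of the second kind. -/
def S2 : ℕ → ℕ → ℚ
  | 0, 0 => 1
  | 0, _ + 1 => 0
  | _ + 1, 0 => 0
  | n + 1, k + 1 => ((k : ℚ) + 1) * S2 n (k + 1) + S2 n k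

/-- Degenerate Changhee polynomials of the second kind, built from a family `E`
(intended: Carlitz degenerate Euler polynomials): `Ch_{n,λ}(x) = Σ_{l≤n} S₁(n,l) E_{l,λ}(x)`. -/
noncomputable def Ch (E : ℕ → ℚ → ℚ) (n : ℕ) (x : ℚ) : ℚ :=
  ∑ m ∈ Finset.range (n + 1), S1 n m * E m x

/-!
The generating-function identity for `E` says `E(x,t) = (1+λt)^{x/λ} E(0,t)`, that is
`E_{n,λ}(x) = Σ_m C(n,m) (x)_{m,λ} E_{n-m,λ}(0)`. Substituting this into
`Ch_{n,λ}(x) = Σ_s S₁(n,s) E_{s,λ}(x)` reduces the claim to the convolution identity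
`C(j+q,j) S₁(n,j+q) = Σ_k C(n,k) S₁(k,j) S₁(n-k,q)`. Since `S₁(n,·)` are the coefficients of the
falling factorial `(X)_n`, this is the coefficient of `X^j Y^q` in the Chu–Vandermonde identity
`(X+Y)_n = Σ_k C(n,k) (X)_k (Y)_{n-k}`; the coefficients in `Y` are read off as Hasse derivatives.
-/

section DescPochhammer

open Polynomial

variable {R : Type*} [CommRing R]

theorem descPochhammer_eval_eq_smeval (r : R) (n : ℕ) :
    (descPochhammer R n).eval r = (descPochhammer ℤ n).smeval r := by
  rw [← aeval_eq_smeval, ← eval_map_algebraMap, algebraMap_int_eq, descPochhammer_map]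

theorem descPochhammer_eval_add (r s : R) (n : ℕ) :
    (descPochhammer R n).eval (r + s) = ∑ k ∈ range (n + 1),
      n.choose k * ((descPochhammer R k).eval r * (descPochhammer R (n - k)).eval s) := by
  simp only [descPochhammer_eval_eq_smeval]
  rw [Ring.descPochhammer_smeval_add n (Commute.all r s), Nat.sum_antidiagonal_eq_sum_range_succ_mk]

variable [IsDomain R] [Infinite R]

theorem taylor_descPochhammer (a : R) (n : ℕ) :
    taylor a (descPochhammer R n) = ∑ k ∈ range (n + 1),
      Polynomial.C (n.choose k * (descPochhammer R (n - k)).eval a) * descPochhammer R k := by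
  refine Polynomial.funext fun b => ?_
  simp only [taylor_eval, descPochhammer_eval_add, eval_finsetSum, eval_mul, eval_C]
  exact sum_congr rfl fun k _ => by ring

theorem hasseDeriv_descPochhammer (j n : ℕ) :
    hasseDeriv j (descPochhammer R n) = ∑ k ∈ range (n + 1),
      Polynomial.C (n.choose k * (descPochhammer R k).coeff j) * descPochhammer R (n - k) := by
  refine Polynomial.funext fun a => ?_
  rw [← taylor_coeff, taylor_descPochhammer, finsetSum_coeff]
  simp only [Polynomial.coeff_C_mul, eval_finsetSum, eval_mul, eval_C]
  exact sum_congr rfl fun k _ => by ring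

end DescPochhammer

section Stirling

open Polynomial

theorem S1_eq_coeff_descPochhammer (n k : ℕ) : S1 n k = (descPochhammer ℚ n).coeff k := by
  induction n generalizing k with
  | zero => cases k <;> simp [S1, Polynomial.coeff_one]
  | succ n ih =>
    rw [descPochhammer_succ_right, ← map_natCast Polynomial.C]
    cases k with
    | zero => rcases n with _ | n <;> simp [S1, ← ih]
    | succ k => rw [coeff_mul_X_sub_C, S1, ih, ih]; ring

theorem S1_eq_zero_of_lt {n k : ℕ} (h : n < k) : S1 n k = 0 := by
  rw [S1_eq_coeff_descPochhammer]
  exact coeff_eq_zero_of_natDegree_lt (by rwa [descPochhammer_natDegree])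

theorem choose_mul_S1_add (n j q : ℕ) :
    ((j + q).choose j : ℚ) * S1 n (j + q) =
      ∑ k ∈ range (n + 1), (n.choose k : ℚ) * S1 k j * S1 (n - k) q := by
  have h := congrArg (Polynomial.coeff · q) (hasseDeriv_descPochhammer (R := ℚ) j n)
  simp only [hasseDeriv_coeff, finsetSum_coeff, Polynomial.coeff_C_mul] at h
  simp only [S1_eq_coeff_descPochhammer, add_comm j q, h]

end Stirling

theorem sum_range_sum_range_mul_sub_eq_mul {R : Type*} [CommSemiring R] {a b : ℕ → R}
    {i j N : ℕ} (ha : ∀ m, i < m → a m = 0) (hb : ∀ p, j < p → b p = 0) (hN : i + j < N) :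
    ∑ s ∈ range N, ∑ m ∈ range (s + 1), a m * b (s - m) =
      (∑ m ∈ range (i + 1), a m) * ∑ p ∈ range (j + 1), b p := by
  rw [sum_range_diag_flip N fun m p => a m * b p, sum_mul,
    sum_subset (f := fun m => a m * ∑ p ∈ range (j + 1), b p)
      (range_subset_range.2 (by omega : i + 1 ≤ N)) fun m _ hm => by
      rw [ha m (by simpa using hm), zero_mul]]
  refine sum_congr rfl fun m _ => ?_
  rw [← mul_sum]
  rcases le_or_gt m i with hm | hm
  · congr 1
    exact (sum_subset (range_subset_range.2 (by omega)) fun p _ hp =>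
      hb p (by simpa using hp)).symm
  · rw [ha m hm, zero_mul, zero_mul]

open Nat

theorem coeff_mk_div_factorial_mul {K : Type*} [Field K] [CharZero K] (a b : ℕ → K) (n : ℕ) :
    PowerSeries.coeff n (mk (fun k => a k / k !) * mk (fun k => b k / k !)) =
      (∑ k ∈ range (n + 1), n.choose k * a k * b (n - k)) / n ! := by
  rw [coeff_mul, Nat.sum_antidiagonal_eq_sum_range_succ_mk, sum_div]
  refine sum_congr rfl fun k hk => ?_
  have hn : (n ! : K) ≠ 0 := Nat.cast_ne_zero.2 (factorial_ne_zero n)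
  rw [coeff_mk, coeff_mk, Nat.cast_choose K (by simpa [Nat.lt_succ_iff] using hk)]
  field_simp

theorem B_zero (l : ℚ) : B l 0 = 1 := by
  ext (_ | n)
  · simp [B, df]
  · simp [B, df, Finset.prod_range_succ', PowerSeries.coeff_one]

theorem constantCoeff_B (l x : ℚ) : constantCoeff (B l x) = 1 := by
  simp [B, df, ← coeff_zero_eq_constantCoeff_apply]

theorem E_eq_sum_choose_mul_df {l : ℚ} {E : ℕ → ℚ → ℚ}
    (hE : ∀ x : ℚ, (mk fun n => E n x / n.factorial) * (B l 1 + 1) = 2 * B l x) (n : ℕ) (x : ℚ) :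
    E n x = ∑ m ∈ range (n + 1), n.choose m * df l x m * E (n - m) 0 := by
  have hB : B l 1 + 1 ≠ 0 := fun h => by
    simpa [constantCoeff_B] using congrArg constantCoeff h
  have hmul : (mk fun n => E n x / n !) = B l x * mk fun n => E n 0 / n ! := by
    refine mul_right_cancel₀ hB ?_
    rw [hE x, mul_assoc, hE 0, B_zero, mul_one, mul_comm]
  have h := congrArg (PowerSeries.coeff n) hmul
  rw [B, coeff_mk_div_factorial_mul, coeff_mk, div_left_inj' (by positivity)] at h
  exact h

/-- `Ch_{n,λ}(x) = Σ_{k≤n} Σ_{m≤k} C(n,k) (x)_{m,λ} S₁(k,m) Ch_{n-k,λ}`. -/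
theorem stmt3 (l : ℚ) (E : ℕ → ℚ → ℚ)
    (hE : ∀ x : ℚ, (PowerSeries.mk fun n => E n x / n.factorial) * (B l 1 + 1)
      = 2 * B l x) :
    ∀ (n : ℕ) (x : ℚ), Ch E n x =
      ∑ k ∈ Finset.range (n + 1), ∑ m ∈ Finset.range (k + 1),
        (n.choose k : ℚ) * df l x m * S1 k m * Ch E (n - k) 0 := by
  intro n x
  calc Ch E n x
      = ∑ s ∈ range (n + 1), ∑ m ∈ range (s + 1), ∑ k ∈ range (n + 1),
          n.choose k * (S1 k m * df l x m * (S1 (n - k) (s - m) * E (s - m) 0)) := by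
        refine sum_congr rfl fun s _ => ?_
        rw [E_eq_sum_choose_mul_df hE, mul_sum]
        refine sum_congr rfl fun m hm => ?_
        have h := choose_mul_S1_add n m (s - m)
        rw [Nat.add_sub_cancel' (by simpa [Nat.lt_succ_iff] using hm)] at h
        calc S1 n s * (s.choose m * df l x m * E (s - m) 0)
            = s.choose m * S1 n s * (df l x m * E (s - m) 0) := by ring
          _ = _ := by rw [h, sum_mul]; exact sum_congr rfl fun k _ => by ring
    _ = ∑ k ∈ range (n + 1), n.choose k * ∑ s ∈ range (n + 1), ∑ m ∈ range (s + 1),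
          S1 k m * df l x m * (S1 (n - k) (s - m) * E (s - m) 0) := by
        simp_rw [mul_sum]
        rw [sum_comm]
        exact sum_congr rfl fun s _ => sum_comm
    _ = ∑ k ∈ range (n + 1), n.choose k * ((∑ m ∈ range (k + 1), S1 k m * df l x m) *
          Ch E (n - k) 0) := by
        refine sum_congr rfl fun k hk => ?_
        congr 1
        exact sum_range_sum_range_mul_sub_eq_mul (a := fun m => S1 k m * df l x m)
          (b := fun p => S1 (n - k) p * E p 0)
          (fun m hm => by rw [S1_eq_zero_of_lt hm, zero_mul])
          (fun p hp => by rw [S1_eq_zero_of_lt hp, zero_mul]) (by simp at hk; omega)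
    _ = _ := by
        refine sum_congr rfl fun k _ => ?_
        rw [sum_mul, mul_sum]
        exact sum_congr rfl fun m _ => by ring
end

section
/- For all n ≥ 0, Ch_{n,λ}(x+1) + Ch_{n,λ}(x) = 2·Σ_{m=0}^{n} (x)_{m,λ} S₁(n,m), where Ch_{n,λ}(x) are the degenerate Changhee polynomials of the second kind. -/
open Finset PowerSeries

/-! The degenerate falling factorials are of binomial type, i.e. `(1+λt)^{(x+y)/λ} =
(1+λt)^{x/λ} (1+λt)^{y/λ}`. Hence the generating function of `E_{n,λ}(x+1) + E_{n,λ}(x)` times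
`(1+λt)^{1/λ} + 1` is `2 (1+λt)^{x/λ} ((1+λt)^{1/λ} + 1)`, and cancelling the factor (its constant
term is `2`) gives `E_{n,λ}(x+1) + E_{n,λ}(x) = 2 (x)_{n,λ}`. The theorem is the image of this
identity under the linear map `Ch = S₁ E`. -/

lemma df_succ (l x : ℚ) (n : ℕ) : df l x (n + 1) = df l x n * (x - n * l) :=
  prod_range_succ _ _

lemma df_add (l x y : ℚ) (n : ℕ) :
    df l (x + y) n = ∑ p ∈ antidiagonal n, (n.choose p.1 : ℚ) * (df l x p.1 * df l y p.2) := by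
  induction n with
  | zero => simp [df]
  | succ n ih =>
    rw [Finset.sum_antidiagonal_choose_succ_mul (fun i j => df l x i * df l y j), df_succ, ih,
      sum_mul, ← sum_add_distrib]
    refine sum_congr rfl fun p hp => ?_
    rw [Finset.HasAntidiagonal.mem_antidiagonal] at hp
    have hn : (n : ℚ) = p.1 + p.2 := by exact_mod_cast hp.symm
    rw [Nat.choose_symm_of_eq_add hp.symm, df_succ, df_succ, hn]
    ring

lemma B_add (l x y : ℚ) : B l (x + y) = B l x * B l y := by
  ext n
  simp only [B, coeff_mul, coeff_mk]
  rw [df_add, sum_div]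
  refine sum_congr rfl fun ⟨i, j⟩ hij => ?_
  rw [Finset.HasAntidiagonal.mem_antidiagonal] at hij
  subst hij
  rw [Nat.cast_add_choose]
  field_simp

lemma B_one_add_one_ne_zero (l : ℚ) : B l 1 + 1 ≠ 0 := fun h => by
  simpa [B, df] using congrArg constantCoeff h

lemma add_one_add_eq_two_mul_df (l : ℚ) (E : ℕ → ℚ → ℚ)
    (hE : ∀ x : ℚ, (PowerSeries.mk fun n => E n x / n.factorial) * (B l 1 + 1)
      = 2 * B l x) (n : ℕ) (x : ℚ) :
    E n (x + 1) + E n x = 2 * df l x n := by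
  have hgf : (PowerSeries.mk fun n => (E n (x + 1) + E n x) / n.factorial) = 2 * B l x := by
    refine mul_right_cancel₀ (B_one_add_one_ne_zero l) ?_
    have hsplit : (PowerSeries.mk fun n => (E n (x + 1) + E n x) / n.factorial)
        = (PowerSeries.mk fun n => E n (x + 1) / n.factorial)
          + PowerSeries.mk fun n => E n x / n.factorial := by
      ext; simp [add_div]
    rw [hsplit, add_mul, hE, hE, B_add]
    ring
  have hcoeff := congrArg (coeff n) hgf
  rw [two_mul, map_add, B, coeff_mk, coeff_mk] at hcoeff
  field_simp at hcoeff
  linear_combination hcoeff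

/-- `Ch_{n,λ}(x+1) + Ch_{n,λ}(x) = 2 Σ_{m≤n} (x)_{m,λ} S₁(n,m)`. -/
theorem stmt7 (l : ℚ) (E : ℕ → ℚ → ℚ)
    (hE : ∀ x : ℚ, (PowerSeries.mk fun n => E n x / n.factorial) * (B l 1 + 1)
      = 2 * B l x) :
    ∀ (n : ℕ) (x : ℚ), Ch E n (x + 1) + Ch E n x =
      2 * ∑ m ∈ Finset.range (n + 1), df l x m * S1 n m := by
  intro n x
  rw [Ch, Ch, ← sum_add_distrib, mul_sum]
  refine sum_congr rfl fun m _ => ?_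
  rw [← mul_add, add_one_add_eq_two_mul_df l E hE m x]
  ring
end

section
/- For all r ≥ 1, n ≥ 0, and any x: Σ_{m=0}^{n} Ch^{(r)}_{m}(x) · S_{2,λ}(n,m) = Σ_{m=0}^{n} Ch^{(r)}_{m,λ}(x) · S₂(n,m), where Ch^{(r)}_m(x) are the (non-degenerate) higher-order Changhee polynomials and Ch^{(r)}_{m,λ}(x) the higher-order degenerate Changhee polynomials of the second kind. -/
/-!
Substituting `t ↦ (e^{λt} - 1)/λ` is a ring endomorphism of `ℚ⟦X⟧`; since
`xⁿ = Σₖ λ^{n-k} S₂(n,k) (x)_{k,λ}`, it sends `B l x = (1 + λt)^{x/λ}` to `e^{xt}`. Applied to the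
defining identity of the degenerate Euler polynomials it gives
`E⁽ʳ⁾ₙ(x) = Σₖ λ^{n-k} S₂(n,k) E⁽ʳ⁾_{k,λ}(x)`. The rest is Stirling inversion: the right-hand side
of the theorem is `E⁽ʳ⁾_{n,λ}(x)`, the left-hand side is `Σⱼ λ^{n-j} S₁(n,j) E⁽ʳ⁾ⱼ(x)`, and the
matrices `(λ^{n-k} S₁(n,k))` and `(λ^{n-k} S₂(n,k))` are inverse to each other.
-/

open Finset PowerSeries

/-- Degenerate Stirling numbers of the second kind, via
`S_{2,λ}(n,m) = Σ_{l=m}^n S₂(l,m) λ^{n-l} S₁(n,l)`. -/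
noncomputable def S2l (l : ℚ) (n m : ℕ) : ℚ :=
  ∑ j ∈ Finset.Icc m n, S2 j m * l ^ (n - j) * S1 n j

def IsLowerTriangular (a : ℕ → ℕ → ℚ) : Prop := ∀ ⦃n k : ℕ⦄, n < k → a n k = 0

def powScale (l : ℚ) (a : ℕ → ℕ → ℚ) (n k : ℕ) : ℚ := l ^ (n - k) * a n k

lemma sum_range_succ_shift {M : Type*} [AddCommMonoid M] {f : ℕ → M} {n : ℕ} (h0 : f 0 = 0) (hn : f (n + 1) = 0) :
    ∑ j ∈ range (n + 1), f (j + 1) = ∑ j ∈ range (n + 1), f j := by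
  have h := (sum_range_succ' f (n + 1)).symm.trans (sum_range_succ f (n + 1))
  rwa [h0, hn, add_zero, add_zero] at h

lemma isLowerTriangular_powScale {a : ℕ → ℕ → ℚ} (ha : IsLowerTriangular a) (l : ℚ) :
    IsLowerTriangular (powScale l a) :=
  fun _ _ h => by rw [powScale, ha h, mul_zero]

namespace IsLowerTriangular

variable {a b : ℕ → ℕ → ℚ}

lemma sum_range_eq (ha : IsLowerTriangular a) {m N : ℕ} (h : m < N) (f : ℕ → ℚ) :
    ∑ k ∈ range (m + 1), a m k * f k = ∑ k ∈ range N, a m k * f k := by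
  refine sum_subset (range_subset_range.mpr h) fun k hk hk' => ?_
  rw [ha (by simpa using hk'), zero_mul]

lemma sum_mul_sum_eq (hb : IsLowerTriangular b) {n : ℕ}
    (hab : ∀ k, ∑ j ∈ range (n + 1), a n j * b j k = if n = k then 1 else 0) (F : ℕ → ℚ) :
    ∑ m ∈ range (n + 1), a n m * ∑ k ∈ range (m + 1), b m k * F k = F n := by
  calc ∑ m ∈ range (n + 1), a n m * ∑ k ∈ range (m + 1), b m k * F k
      = ∑ m ∈ range (n + 1), ∑ k ∈ range (n + 1), a n m * b m k * F k := by
        refine sum_congr rfl fun m hm => ?_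
        rw [hb.sum_range_eq (mem_range.mp hm), mul_sum]
        simp only [mul_assoc]
    _ = ∑ k ∈ range (n + 1), (if n = k then 1 else 0) * F k := by
        rw [sum_comm]
        simp only [← sum_mul, hab]
    _ = F n := by simp

-- A one-sided inverse of a square matrix is two-sided; truncate to the indices `< n + k + 1`.
lemma orthogonal_comm (ha : IsLowerTriangular a) (hb : IsLowerTriangular b)
    (hab : ∀ n k, ∑ j ∈ range (n + 1), a n j * b j k = if n = k then 1 else 0) (n k : ℕ) :
    ∑ j ∈ range (n + 1), b n j * a j k = if n = k then 1 else 0 := by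
  set N := n + k + 1
  let M₁ : Matrix (Fin N) (Fin N) ℚ := Matrix.of fun i j => a i j
  let M₂ : Matrix (Fin N) (Fin N) ℚ := Matrix.of fun i j => b i j
  have entry {c d : ℕ → ℕ → ℚ} (hc : IsLowerTriangular c) (i j : Fin N) :
      ((Matrix.of fun i j : Fin N => c i j) * Matrix.of fun i j : Fin N => d i j) i j
        = ∑ m ∈ range (i + 1), c i m * d m j := by
    rw [Matrix.mul_apply, hc.sum_range_eq i.isLt]
    exact Fin.sum_univ_eq_sum_range (fun m => c i m * d m j) N
  have h12 : M₁ * M₂ = 1 := by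
    ext i j
    simp only [M₁, M₂, entry ha, hab, Matrix.one_apply, Fin.val_inj]
  have h21 : M₂ * M₁ = 1 := mul_eq_one_comm.mp h12
  replace h21 := congrFun (congrFun h21 ⟨n, by omega⟩) ⟨k, by omega⟩
  simpa only [M₂, M₁, entry hb, Matrix.one_apply, Fin.mk.injEq] using h21

lemma sum_powScale_mul_powScale (hb : IsLowerTriangular b) (l : ℚ) (n k : ℕ) :
    ∑ j ∈ range (n + 1), powScale l a n j * powScale l b j k
      = l ^ (n - k) * ∑ j ∈ range (n + 1), a n j * b j k := by
  rw [mul_sum]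
  refine sum_congr rfl fun j hj => ?_
  have hjn : j ≤ n := Nat.lt_succ_iff.mp (mem_range.mp hj)
  rcases lt_or_ge j k with hjk | hkj
  · simp [powScale, hb hjk]
  · rw [powScale, powScale, ← Nat.sub_add_sub_cancel hjn hkj, pow_add]
    ring

lemma orthogonal_powScale (hb : IsLowerTriangular b)
    (hab : ∀ n k, ∑ j ∈ range (n + 1), a n j * b j k = if n = k then 1 else 0) (l : ℚ)
    (n k : ℕ) :
    ∑ j ∈ range (n + 1), powScale l a n j * powScale l b j k = if n = k then 1 else 0 := by
  rw [sum_powScale_mul_powScale hb, hab]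
  split_ifs with h <;> simp [h]

end IsLowerTriangular

lemma isLowerTriangular_S1 : IsLowerTriangular S1 := by
  intro n
  induction n with
  | zero => intro k hk; cases k with | zero => omega | succ k => rfl
  | succ n ih =>
    intro k hk
    cases k with
    | zero => omega
    | succ k => rw [S1, ih (by omega), ih (by omega), mul_zero, sub_zero]

lemma isLowerTriangular_S2 : IsLowerTriangular S2 := by
  intro n
  induction n with
  | zero => intro k hk; cases k with | zero => omega | succ k => rfl
  | succ n ih =>
    intro k hk
    cases k with
    | zero => omega
    | succ k => rw [S2, ih (by omega), ih (by omega), mul_zero, add_zero]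

lemma sum_S2_mul_S1 (n k : ℕ) :
    ∑ j ∈ range (n + 1), S2 n j * S1 j k = if n = k then 1 else 0 := by
  induction n generalizing k with
  | zero => cases k <;> simp [S1, S2]
  | succ n ih =>
    rw [sum_range_succ']
    cases k with
    | zero => simp [S1, S2]
    | succ k =>
      have shift : ∑ j ∈ range (n + 1), ((j : ℚ) + 1) * S2 n (j + 1) * S1 (j + 1) (k + 1)
          = ∑ j ∈ range (n + 1), (j : ℚ) * S2 n j * S1 j (k + 1) := by
        have := sum_range_succ_shift (f := fun j => (j : ℚ) * S2 n j * S1 j (k + 1)) (n := n)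
          (by simp) (by simp [isLowerTriangular_S2 (Nat.lt_succ_self n)])
        simpa using this
      have expand : ∀ j, S2 (n + 1) (j + 1) * S1 (j + 1) (k + 1)
          = ((j : ℚ) + 1) * S2 n (j + 1) * S1 (j + 1) (k + 1)
            + (S2 n j * S1 j k - (j : ℚ) * S2 n j * S1 j (k + 1)) := by
        intro j
        rw [S2.eq_4, S1.eq_4]
        ring
      simp only [expand, sum_add_distrib, sum_sub_distrib, shift, ih, S2.eq_3, zero_mul]
      simp

lemma sum_S1_mul_S2 (n k : ℕ) :
    ∑ j ∈ range (n + 1), S1 n j * S2 j k = if n = k then 1 else 0 :=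
  isLowerTriangular_S2.orthogonal_comm isLowerTriangular_S1 sum_S2_mul_S1 n k

lemma powScale_S2_succ_succ (l : ℚ) (n k : ℕ) :
    powScale l S2 (n + 1) (k + 1) = (k + 1) * l * powScale l S2 n (k + 1) + powScale l S2 n k := by
  rcases lt_or_ge k n with hkn | hnk
  · rw [powScale, powScale, powScale, S2.eq_4, Nat.add_sub_add_right,
      show n - k = n - (k + 1) + 1 by omega, pow_succ]
    ring
  · rw [powScale, powScale, powScale, S2.eq_4, Nat.add_sub_add_right,
      isLowerTriangular_S2 (show n < k + 1 by omega)]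
    ring

lemma sum_powScale_S2_mul_df (l x : ℚ) (n : ℕ) :
    ∑ j ∈ range (n + 1), powScale l S2 n j * df l x j = x ^ n := by
  induction n with
  | zero => simp [powScale, S2, df]
  | succ n ih =>
    have shift : ∑ j ∈ range (n + 1), ((j : ℚ) + 1) * l * powScale l S2 n (j + 1) * df l x (j + 1)
        = ∑ j ∈ range (n + 1), (j : ℚ) * l * powScale l S2 n j * df l x j := by
      have := sum_range_succ_shift (f := fun j => (j : ℚ) * l * powScale l S2 n j * df l x j)
        (n := n) (by simp)
        (by simp [(isLowerTriangular_powScale isLowerTriangular_S2 l) (Nat.lt_succ_self n)])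
      simpa using this
    have expand : ∀ j, powScale l S2 (n + 1) (j + 1) * df l x (j + 1)
        = ((j : ℚ) + 1) * l * powScale l S2 n (j + 1) * df l x (j + 1)
          + (x * (powScale l S2 n j * df l x j) - (j : ℚ) * l * powScale l S2 n j * df l x j) := by
      intro j
      rw [powScale_S2_succ_succ, df_succ]
      ring
    rw [sum_range_succ']
    simp only [expand, sum_add_distrib, sum_sub_distrib, shift, ← mul_sum, ih]
    simp [powScale, S2, pow_succ, mul_comm]

-- `(e^{λt} - 1)/λ` (just `t` when `λ = 0`), the compositional inverse of `log(1 + λt)/λ`.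
noncomputable def expSubOneDiv (l : ℚ) : PowerSeries ℚ :=
  PowerSeries.mk fun n => if n = 0 then 0 else l ^ (n - 1) / n.factorial

lemma derivative_expSubOneDiv (l : ℚ) : d⁄dX ℚ (expSubOneDiv l) = C l * expSubOneDiv l + 1 := by
  ext n
  rw [coeff_derivative]
  rcases n with _ | n
  · simp [expSubOneDiv]
  · simp only [expSubOneDiv, coeff_mk, map_add, coeff_C_mul, coeff_one, Nat.succ_ne_zero,
      if_false, add_zero, Nat.add_sub_cancel, Nat.factorial_succ (n + 1), pow_succ']
    push_cast
    field_simp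

lemma coeff_succ_expSubOneDiv_pow_succ (l : ℚ) (k n : ℕ) :
    coeff (n + 1) (expSubOneDiv l ^ (k + 1)) * (n + 1)
      = (k + 1) * (l * coeff n (expSubOneDiv l ^ (k + 1)) + coeff n (expSubOneDiv l ^ k)) := by
  have hd : d⁄dX ℚ (expSubOneDiv l ^ (k + 1))
      = C ((k : ℚ) + 1) * (C l * expSubOneDiv l ^ (k + 1) + expSubOneDiv l ^ k) := by
    rw [Derivation.leibniz_pow, derivative_expSubOneDiv, Nat.add_sub_cancel, smul_eq_mul,
      nsmul_eq_mul]
    simp only [map_add, map_natCast, map_one, Nat.cast_add, Nat.cast_one]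
    ring
  rw [← coeff_derivative, hd, coeff_C_mul, map_add, coeff_C_mul]

lemma coeff_expSubOneDiv_pow (l : ℚ) (k n : ℕ) :
    coeff n (expSubOneDiv l ^ k) = k.factorial * powScale l S2 n k / n.factorial := by
  induction k generalizing n with
  | zero => cases n <;> simp [powScale, S2, coeff_one]
  | succ k ihk =>
    induction n with
    | zero =>
      have : constantCoeff (expSubOneDiv l) = 0 := by simp [expSubOneDiv]
      rw [coeff_zero_eq_constantCoeff_apply, map_pow, this, zero_pow k.succ_ne_zero,
        isLowerTriangular_powScale isLowerTriangular_S2 l k.succ_pos, mul_zero, zero_div]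
    | succ n ihn =>
      have h := coeff_succ_expSubOneDiv_pow_succ l k n
      rw [ihn, ihk] at h
      rw [← eq_div_iff (by positivity)] at h
      rw [h, powScale_S2_succ_succ, Nat.factorial_succ, Nat.factorial_succ]
      push_cast
      field_simp

lemma hasSubst_expSubOneDiv (l : ℚ) : HasSubst (expSubOneDiv l) :=
  HasSubst.of_constantCoeff_zero' (by simp [expSubOneDiv])

lemma coeff_subst_expSubOneDiv (l : ℚ) (f : ℕ → ℚ) (n : ℕ) :
    coeff n ((PowerSeries.mk fun j => f j / j.factorial).subst (expSubOneDiv l))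
      = (∑ j ∈ range (n + 1), powScale l S2 n j * f j) / n.factorial := by
  rw [coeff_subst' (hasSubst_expSubOneDiv l), finsum_eq_sum_of_support_subset (s := range (n + 1)),
    sum_div]
  · refine sum_congr rfl fun j _ => ?_
    rw [coeff_mk, coeff_expSubOneDiv_pow, smul_eq_mul]
    field_simp
  · intro j hj
    by_contra hjn
    refine hj ?_
    simp only [coeff_expSubOneDiv_pow,
      isLowerTriangular_powScale isLowerTriangular_S2 l (by simpa using hjn), mul_zero, zero_div,
      smul_zero]

lemma subst_expSubOneDiv_B (l x : ℚ) :
    (B l x).subst (expSubOneDiv l) = PowerSeries.mk fun n => x ^ n / n.factorial := by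
  ext n
  rw [B, coeff_subst_expSubOneDiv, sum_powScale_S2_mul_df, coeff_mk]

lemma eq_sum_powScale_S2_mul_of_egf {r : ℕ} {l : ℚ} {E0 El : ℕ → ℚ → ℚ}
    (hE0 : ∀ x : ℚ, (PowerSeries.mk fun n => E0 n x / n.factorial) *
        ((PowerSeries.mk fun n => (1 : ℚ) / n.factorial) + 1) ^ r
      = 2 ^ r * PowerSeries.mk fun n => x ^ n / n.factorial)
    (hEl : ∀ x : ℚ, (PowerSeries.mk fun n => El n x / n.factorial) * (B l 1 + 1) ^ r
      = 2 ^ r * B l x) (n : ℕ) (x : ℚ) :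
    E0 n x = ∑ j ∈ range (n + 1), powScale l S2 n j * El j x := by
  have hsubst := congrArg (substAlgHom (R := ℚ) (hasSubst_expSubOneDiv l)) (hEl x)
  simp only [map_mul, map_pow, map_add, map_one, map_ofNat, coe_substAlgHom,
    subst_expSubOneDiv_B, one_pow] at hsubst
  have hne : ((PowerSeries.mk fun n => (1 : ℚ) / n.factorial) + 1) ^ r ≠ 0 := by
    refine pow_ne_zero r fun h => ?_
    simpa using congrArg (coeff 0) h
  have hegf := congrArg (coeff n) (mul_right_cancel₀ hne (hsubst.trans (hE0 x).symm))
  rw [coeff_subst_expSubOneDiv, coeff_mk] at hegf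
  exact ((div_left_inj' (by positivity)).mp hegf).symm

lemma S2l_eq_sum (l : ℚ) (n m : ℕ) :
    S2l l n m = ∑ j ∈ range (n + 1), powScale l S1 n j * S2 j m := by
  calc S2l l n m = ∑ j ∈ Icc m n, powScale l S1 n j * S2 j m :=
        sum_congr rfl fun j _ => by rw [powScale]; ring
    _ = _ := by
      refine sum_subset (fun j hj => by simp only [mem_Icc, mem_range] at hj ⊢; omega)
        fun j hj hj' => ?_
      simp only [mem_Icc, mem_range, not_and, not_le] at hj hj'
      rw [isLowerTriangular_S2 (show j < m by omega), mul_zero]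

lemma sum_Ch_mul_S2 (E : ℕ → ℚ → ℚ) (n : ℕ) (x : ℚ) :
    ∑ m ∈ range (n + 1), Ch E m x * S2 n m = E n x := by
  simp_rw [mul_comm (Ch E _ x)]
  exact isLowerTriangular_S1.sum_mul_sum_eq (sum_S2_mul_S1 n) (E · x)

lemma sum_Ch_mul_S2l (E : ℕ → ℚ → ℚ) (l : ℚ) (n : ℕ) (x : ℚ) :
    ∑ m ∈ range (n + 1), Ch E m x * S2l l n m
      = ∑ j ∈ range (n + 1), powScale l S1 n j * E j x := by
  simp only [S2l_eq_sum, mul_sum]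
  rw [sum_comm]
  refine sum_congr rfl fun j hj => ?_
  calc ∑ m ∈ range (n + 1), Ch E m x * (powScale l S1 n j * S2 j m)
      = powScale l S1 n j * ∑ m ∈ range (n + 1), S2 j m * Ch E m x := by
        rw [mul_sum]
        exact sum_congr rfl fun m _ => by ring
    _ = powScale l S1 n j * E j x := by
        rw [← isLowerTriangular_S2.sum_range_eq (mem_range.mp hj),
          ← sum_Ch_mul_S2 E j x]
        simp_rw [mul_comm (S2 j _)]

theorem stmt12_general (l : ℚ) (r : ℕ) (E0 El : ℕ → ℚ → ℚ)
    (hE0 : ∀ x : ℚ, (PowerSeries.mk fun n => E0 n x / n.factorial) *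
        ((PowerSeries.mk fun n => (1 : ℚ) / n.factorial) + 1) ^ r
      = 2 ^ r * PowerSeries.mk fun n => x ^ n / n.factorial)
    (hEl : ∀ x : ℚ, (PowerSeries.mk fun n => El n x / n.factorial) * (B l 1 + 1) ^ r
      = 2 ^ r * B l x) :
    ∀ (n : ℕ) (x : ℚ),
      ∑ m ∈ Finset.range (n + 1), Ch E0 m x * S2l l n m
        = ∑ m ∈ Finset.range (n + 1), Ch El m x * S2 n m := by
  intro n x
  rw [sum_Ch_mul_S2l, sum_Ch_mul_S2]
  simp only [eq_sum_powScale_S2_mul_of_egf hE0 hEl _ x]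
  exact (isLowerTriangular_powScale isLowerTriangular_S2 l).sum_mul_sum_eq
    (isLowerTriangular_S2.orthogonal_powScale sum_S1_mul_S2 l n) _

/-- `Σ_{m≤n} Ch⁽ʳ⁾_m(x) S_{2,λ}(n,m) = Σ_{m≤n} Ch⁽ʳ⁾_{m,λ}(x) S₂(n,m)`, where `E0` are the
order-r Euler polynomials (λ = 0 case) and `El` the order-r degenerate Euler polynomials. -/
theorem stmt12 (l : ℚ) (r : ℕ) (hr : 1 ≤ r) (E0 El : ℕ → ℚ → ℚ)
    (hE0 : ∀ x : ℚ, (PowerSeries.mk fun n => E0 n x / n.factorial) *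
        ((PowerSeries.mk fun n => (1 : ℚ) / n.factorial) + 1) ^ r
      = 2 ^ r * PowerSeries.mk fun n => x ^ n / n.factorial)
    (hEl : ∀ x : ℚ, (PowerSeries.mk fun n => El n x / n.factorial) * (B l 1 + 1) ^ r
      = 2 ^ r * B l x) :
    ∀ (n : ℕ) (x : ℚ),
      ∑ m ∈ Finset.range (n + 1), Ch E0 m x * S2l l n m
        = ∑ m ∈ Finset.range (n + 1), Ch El m x * S2 n m :=
  stmt12_general l r E0 El hE0 hEl
end

section
/- For all r ≥ 1 and n ≥ 0, the order-r degenerate Euler numbers satisfy E^{(r)}_{n,λ} = Σ_{m=0}^{n} (-1)^m · m! · C(r+m-1, m) · 2^{-m} · S_{2,λ}(n,m). -/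
/-!
With `f = B₁ - 1`, which has zero constant term, `B₁ + 1 = 2(1 + f/2)`, so the generating
function of `E⁽ʳ⁾` is `(1 + f/2)⁻ʳ`: the series `(1 - X)⁻ʳ = ∑ C(r+m-1, m) Xᵐ` with
`X := -f/2` substituted. Only the terms with `m ≤ n` contribute to the coefficient of `tⁿ`, and
that coefficient of `fᵐ` is `m! S_{2,λ}(n,m) / n!`.
-/

open Finset PowerSeries

namespace PowerSeries

section CommRing

variable {R : Type*} [CommRing R]

theorem coeff_pow_eq_zero_of_constantCoeff_eq_zero {f : R⟦X⟧} (hf : constantCoeff f = 0)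
    {n d : ℕ} (h : n < d) : coeff n (f ^ d) = 0 :=
  coeff_of_lt_order _ ((Nat.cast_lt.mpr h).trans_le (le_order_pow_of_constantCoeff_eq_zero d hf))

theorem coeff_subst_eq_sum_range {f : R⟦X⟧} (hf : constantCoeff f = 0) (g : R⟦X⟧)
    (n : ℕ) :
    coeff n (g.subst f) = ∑ d ∈ range (n + 1), coeff d g * coeff n (f ^ d) := by
  rw [coeff_subst' (HasSubst.of_constantCoeff_zero' hf)]
  refine finsum_eq_sum_of_support_subset _ fun d hd => ?_
  by_contra hdn
  simp only [coe_range, Set.mem_Iio, not_lt] at hdn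
  exact hd (by simp [coeff_pow_eq_zero_of_constantCoeff_eq_zero hf (by omega : n < d)])

theorem coeff_invOneSubPow_val (r d : ℕ) :
    coeff d (invOneSubPow R r).val = ((r + d - 1).choose d : R) := by
  cases r with
  | zero => cases d <;> simp [invOneSubPow_zero, coeff_one]
  | succ r => rw [invOneSubPow_val_succ_eq_mk_add_choose, coeff_mk, Nat.choose_symm_add]; simp

theorem subst_invOneSubPow_mul_one_sub_pow {u : R⟦X⟧} (hu : HasSubst u) (r : ℕ) :
    (invOneSubPow R r).val.subst u * (1 - u) ^ r = 1 := by
  have := congrArg (substAlgHom hu) (invOneSubPow R r).val_inv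
  rwa [invOneSubPow_inv_eq_one_sub_pow, map_mul, map_pow, map_sub, map_one, substAlgHom_X,
    coe_substAlgHom] at this

end CommRing

section Field

variable {K : Type*} [Field K]

theorem eq_subst_invOneSubPow_of_mul_C_add_pow_eq {F f : K⟦X⟧} (hf : constantCoeff f = 0)
    {c : K} (hc : c ≠ 0) {r : ℕ} (hF : F * (C c + f) ^ r = C c ^ r) :
    F = (invOneSubPow K r).val.subst (-c⁻¹ • f) := by
  have hu : HasSubst (-c⁻¹ • f) := HasSubst.of_constantCoeff_zero' (by simp [hf])
  have hcf : C c + f = C c * (1 - -c⁻¹ • f) := by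
    rw [neg_smul, sub_neg_eq_add, mul_add, mul_one, smul_eq_C_mul, ← mul_assoc, ← map_mul,
      mul_inv_cancel₀ hc, map_one, one_mul]
  rw [hcf, mul_pow] at hF
  refine left_inv_eq_right_inv (a := (1 - -c⁻¹ • f) ^ r) ?_ ?_
  · apply ((hc.isUnit.map C).pow r).mul_left_cancel
    linear_combination hF
  · rw [mul_comm]
    exact subst_invOneSubPow_mul_one_sub_pow hu r

theorem coeff_eq_sum_of_mul_C_add_pow_eq {F f : K⟦X⟧} (hf : constantCoeff f = 0)
    {c : K} (hc : c ≠ 0) {r : ℕ} (hF : F * (C c + f) ^ r = C c ^ r) (n : ℕ) :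
    coeff n F =
      ∑ d ∈ range (n + 1), ((r + d - 1).choose d : K) * (-c⁻¹) ^ d * coeff n (f ^ d) := by
  rw [eq_subst_invOneSubPow_of_mul_C_add_pow_eq hf hc hF,
    coeff_subst_eq_sum_range (by simp [hf])]
  refine sum_congr rfl fun d _ => ?_
  rw [coeff_invOneSubPow_val, smul_pow, coeff_smul, smul_eq_mul, mul_assoc]

end Field

end PowerSeries

theorem stmt14_general (l : ℚ) (r : ℕ) (E : ℕ → ℚ) (S2l : ℕ → ℕ → ℚ)
    (hE : (PowerSeries.mk fun n => E n / n.factorial) * (B l 1 + 1) ^ r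
      = 2 ^ r)
    (hS : ∀ m : ℕ, (B l 1 - 1) ^ m
      = (m.factorial : ℚ) • PowerSeries.mk fun n => S2l n m / n.factorial) :
    ∀ n : ℕ, E n = ∑ m ∈ Finset.range (n + 1),
      (-1 : ℚ) ^ m * m.factorial * ((r + m - 1).choose m : ℚ) * (2 : ℚ)⁻¹ ^ m *
        S2l n m := by
  intro n
  have hf : constantCoeff (B l 1 - 1) = 0 := by simp [B, df]
  have hF : (mk fun n => E n / n.factorial) * (C 2 + (B l 1 - 1)) ^ r = C 2 ^ r := by
    rw [map_ofNat, ← hE]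
    ring
  have hcoeff := coeff_eq_sum_of_mul_C_add_pow_eq hf two_ne_zero hF n
  simp only [coeff_mk, hS, coeff_smul, smul_eq_mul] at hcoeff
  rw [div_eq_iff (Nat.cast_ne_zero.mpr n.factorial_ne_zero)] at hcoeff
  rw [hcoeff, sum_mul]
  refine sum_congr rfl fun m _ => ?_
  rw [neg_pow]
  field_simp

/-- For `E⁽ʳ⁾` the order-r degenerate Euler numbers:
`E⁽ʳ⁾_{n,λ} = Σ_{m≤n} (-1)ᵐ m! C(r+m-1,m) 2⁻ᵐ S_{2,λ}(n,m)`. -/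
theorem stmt14 (l : ℚ) (r : ℕ) (hr : 1 ≤ r) (E : ℕ → ℚ) (S2l : ℕ → ℕ → ℚ)
    (hE : (PowerSeries.mk fun n => E n / n.factorial) * (B l 1 + 1) ^ r
      = 2 ^ r)
    (hS : ∀ m : ℕ, (B l 1 - 1) ^ m
      = (m.factorial : ℚ) • PowerSeries.mk fun n => S2l n m / n.factorial) :
    ∀ n : ℕ, E n = ∑ m ∈ Finset.range (n + 1),
      (-1 : ℚ) ^ m * m.factorial * ((r + m - 1).choose m : ℚ) * (2 : ℚ)⁻¹ ^ m *
        S2l n m :=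
  stmt14_general l r E S2l hE hS
end
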